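/- arXiv:2004.13196 — 3 statements merged into one kernel-verified Lean document; each statement's English description precedes it below -/
import Mathlib

section
/- For every integer n ≥ 3 and every integer k ≥ 0, the k-th moment of distance is I(n,k) = (1/((k+1)(k+2))) · [ (4/(k+3)) · (π/n)^{k+2} · ₁F₂(1; (k+4)/2, (k+5)/2; −π²/n²) + tan(π/n) · ( n · (π/2)^{k+1} · ₁F₂(1; (k+3)/2, (k+4)/2; −π²/4) − 2 · (π/n)^{k+1} · ₁F₂(1; (k+3)/2, (k+4)/2; −π²/n²) ) ]. -/
open MeasureTheory

/-- The `k`-th moment of distance on the homogeneous lens space `L(n;1)`,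
expressed as an explicit integral over a fundamental domain in join coordinates. -/
noncomputable def momentI (n k : ℕ) : ℝ :=
  ((n : ℝ) ^ 2 / (2 * Real.pi ^ 2)) *
    ∫ θ₂ in (-(Real.pi / n))..(Real.pi / n),
      ∫ θ₁ in (-(Real.pi / n))..(Real.pi / n),
        ∫ η in (0 : ℝ)..(Real.pi / 2),
          (Real.arccos (Real.cos θ₁ * Real.cos η)) ^ k * Real.cos η * Real.sin η

/-- The ascending Pochhammer symbol `(b)_j = b (b+1) ⋯ (b+j-1)`. -/
noncomputable def asc (b : ℝ) (j : ℕ) : ℝ := ∏ i ∈ Finset.range j, (b + i)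

/-- The generalized hypergeometric function `₁F₂(1; b₁, b₂; z) = ∑ z^j / ((b₁)_j (b₂)_j)`. -/
noncomputable def oneFtwo (b₁ b₂ z : ℝ) : ℝ := ∑' j : ℕ, z ^ j / (asc b₁ j * asc b₂ j)

/-! Substituting `cos s = cos θ₁ * cos η` turns the inner integral into
`(∫ s in |θ₁|..π/2, s ^ k * sin s * cos s) / cos θ₁ ^ 2`. Repeated integration by parts expresses
that integral through the tails `trigTail m` of the sine and cosine series; one more integration
by parts, against `tan' = 1 / cos ^ 2`, does the middle integral, and the outer one is trivial.
Finally, by the duplication formula `4 ^ j (b/2)_j ((b+1)/2)_j = (b)_{2j}`, the series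
`₁F₂(1; (m+3)/2, (m+4)/2; -x²)` equals `(m+2)! / (2x)^(m+2) * trigTail (m+2) (2x)`. -/

open Real Nat

lemma hasDerivAt_pow_succ_div_factorial (n : ℕ) (x : ℝ) :
    HasDerivAt (fun z : ℝ => z ^ (n + 1) / (n + 1)!) (x ^ n / n !) x := by
  refine ((hasDerivAt_pow (n + 1) x).div_const ((n + 1)! : ℝ)).congr_deriv ?_
  rw [Nat.factorial_succ, Nat.cast_mul, Nat.add_sub_cancel]
  field_simp

lemma summable_pow_add_two_mul_div_factorial (m : ℕ) (r : ℝ) :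
    Summable (fun j : ℕ => r ^ (m + 2 * j) / (m + 2 * j)!) :=
  (Real.summable_pow_div_factorial r).comp_injective fun a b h => by simpa using h

/-- Up to sign, `trigTail m` is the remainder of the Taylor series of `cos` (`m` even) or `sin`
(`m` odd) after its terms of degree `< m`. -/
noncomputable def trigTail (m : ℕ) (y : ℝ) : ℝ :=
  ∑' j : ℕ, (-1) ^ j * y ^ (m + 2 * j) / (m + 2 * j)!

lemma summable_trigTail (m : ℕ) (y : ℝ) :
    Summable (fun j : ℕ => (-1) ^ j * y ^ (m + 2 * j) / (m + 2 * j)!) := by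
  refine (summable_pow_add_two_mul_div_factorial m |y|).of_norm_bounded fun j => le_of_eq ?_
  simp

lemma trigTail_zero {m : ℕ} (hm : m ≠ 0) : trigTail m 0 = 0 := by
  refine (tsum_congr fun j => ?_).trans tsum_zero
  rw [zero_pow (by omega), mul_zero, zero_div]

lemma trigTail_add_trigTail_add_two (m : ℕ) (y : ℝ) :
    trigTail m y + trigTail (m + 2) y = y ^ m / m ! := by
  have hshift : ∀ j : ℕ, (-1 : ℝ) ^ (j + 1) * y ^ (m + 2 * (j + 1)) / (m + 2 * (j + 1))! =
      -((-1) ^ j * y ^ (m + 2 + 2 * j) / (m + 2 + 2 * j)!) := fun j => by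
    rw [show m + 2 * (j + 1) = m + 2 + 2 * j by ring, pow_succ]
    ring
  rw [trigTail, (summable_trigTail m y).tsum_eq_zero_add, tsum_congr hshift, tsum_neg, trigTail]
  simp

lemma hasDerivAt_trigTail (m : ℕ) (y : ℝ) : HasDerivAt (trigTail (m + 1)) (trigTail m y) y := by
  set R := |y| + 1
  have hy : y ∈ Set.Ioo (-R) R := abs_lt.mp (by linarith)
  refine hasDerivAt_tsum_of_isPreconnected (summable_pow_add_two_mul_div_factorial m R)
    (g := fun j (z : ℝ) => (-1 : ℝ) ^ j * z ^ (m + 1 + 2 * j) / (m + 1 + 2 * j)!)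
    (g' := fun j (z : ℝ) => (-1 : ℝ) ^ j * z ^ (m + 2 * j) / (m + 2 * j)!)
    isOpen_Ioo isPreconnected_Ioo (fun j z _ => ?_) (fun j z hz => ?_) hy
    (summable_trigTail (m + 1) y) hy
  · simpa only [mul_div_assoc, add_right_comm m 1] using
      (hasDerivAt_pow_succ_div_factorial (m + 2 * j) z).const_mul ((-1 : ℝ) ^ j)
  · have : |z| ≤ R := abs_le.mpr ⟨hz.1.le, hz.2.le⟩
    simp only [norm_div, norm_mul, norm_pow, norm_neg, norm_one, one_pow, one_mul,
      Real.norm_eq_abs, Nat.abs_cast]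
    gcongr

lemma hasDerivAt_trigTail_two_mul (m : ℕ) (t : ℝ) :
    HasDerivAt (fun s => trigTail (m + 1) (2 * s)) (2 * trigTail m (2 * t)) t := by
  have := (hasDerivAt_trigTail m (2 * t)).comp t ((hasDerivAt_id t).const_mul 2)
  simpa [mul_comm, Function.comp_def] using this

lemma four_pow_mul_asc_half_mul_asc_half (b : ℝ) (j : ℕ) :
    4 ^ j * (asc (b / 2) j * asc ((b + 1) / 2) j) = asc b (2 * j) := by
  induction j with
  | zero => simp [asc]
  | succ j ih =>
    rw [show 2 * (j + 1) = 2 * j + 1 + 1 by ring]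
    simp only [asc, Finset.prod_range_succ] at ih ⊢
    rw [← ih]
    push_cast
    ring

lemma factorial_mul_asc_nat_add_one (m i : ℕ) : (m ! : ℝ) * asc (m + 1) i = (m + i)! := by
  induction i with
  | zero => simp [asc]
  | succ i ih =>
    simp only [asc, Finset.prod_range_succ] at ih ⊢
    rw [← add_assoc, Nat.factorial_succ, ← mul_assoc, ih]
    push_cast
    ring

lemma oneFtwo_neg_sq (m : ℕ) {x : ℝ} (hx : x ≠ 0) :
    oneFtwo (((m : ℝ) + 3) / 2) (((m : ℝ) + 4) / 2) (-x ^ 2) =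
      (m + 2)! / (2 * x) ^ (m + 2) * trigTail (m + 2) (2 * x) := by
  rw [oneFtwo, trigTail, ← tsum_mul_left]
  refine tsum_congr fun j => ?_
  have hasc : asc (((m : ℝ) + 3) / 2) j * asc (((m : ℝ) + 4) / 2) j =
      (m + 2 + 2 * j)! / (4 ^ j * (m + 2)!) := by
    have hdup := four_pow_mul_asc_half_mul_asc_half ((m : ℝ) + 3) j
    have hfac : ((m + 2)! : ℝ) * asc ((m : ℝ) + 3) (2 * j) = (m + 2 + 2 * j)! := by
      convert factorial_mul_asc_nat_add_one (m + 2) (2 * j) using 3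
      push_cast
      ring
    rw [eq_div_iff (by positivity), ← hfac, ← hdup]
    ring_nf
  rw [hasc, pow_add (2 * x) (m + 2), pow_mul, neg_pow, mul_pow 2 x 2]
  field_simp
  ring

/-- `∫ s in t..π/2, s ^ k * sin s * cos s` in closed form (integrate `s ^ k * sin (2 * s) / 2`
by parts, `k` times). -/
noncomputable def sinCosPrimitive (k : ℕ) (t : ℝ) : ℝ :=
  k ! / 2 ^ (k + 2) *
    (trigTail (k + 2) π + cos (2 * t) * trigTail (k + 2) (2 * t)
      - sin (2 * t) * trigTail (k + 1) (2 * t))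

lemma hasDerivAt_sinCosPrimitive (k : ℕ) (t : ℝ) :
    HasDerivAt (sinCosPrimitive k) (-(t ^ k * sin t * cos t)) t := by
  have hcos := (hasDerivAt_cos (2 * t)).comp t ((hasDerivAt_id t).const_mul 2)
  have hsin := (hasDerivAt_sin (2 * t)).comp t ((hasDerivAt_id t).const_mul 2)
  have h := (((hasDerivAt_const t (trigTail (k + 2) π)).add
    (hcos.mul (hasDerivAt_trigTail_two_mul (k + 1) t))).sub
    (hsin.mul (hasDerivAt_trigTail_two_mul k t))).const_mul ((k ! : ℝ) / 2 ^ (k + 2))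
  refine h.congr_deriv ?_
  simp only [Function.comp_apply, mul_one]
  rw [eq_sub_of_add_eq' (trigTail_add_trigTail_add_two k (2 * t)), sin_two_mul, mul_pow]
  field_simp
  ring

lemma sinCosPrimitive_pi_div_two (k : ℕ) : sinCosPrimitive k (π / 2) = 0 := by
  simp [sinCosPrimitive, mul_div_cancel₀]

@[fun_prop]
lemma continuous_sinCosPrimitive (k : ℕ) : Continuous (sinCosPrimitive k) :=
  continuous_iff_continuousAt.mpr fun t => (hasDerivAt_sinCosPrimitive k t).continuousAt

lemma hasDerivAt_sinCosPrimitive_arccos_mul_cos (k : ℕ) {c η : ℝ} (hc0 : 0 < c) (hc1 : c ≤ 1)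
    (hη : η ∈ Set.Ioo 0 (π / 2)) :
    HasDerivAt (fun η => sinCosPrimitive k (arccos (c * cos η)))
      (-(c ^ 2 * (arccos (c * cos η) ^ k * cos η * sin η))) η := by
  have hcos0 : 0 < cos η := cos_pos_of_mem_Ioo ⟨by linarith [hη.1, pi_pos], hη.2⟩
  have hcos1 : cos η < 1 := by
    simpa using cos_lt_cos_of_nonneg_of_le_pi le_rfl (by linarith [hη.2, pi_pos]) hη.1
  have hu1 : c * cos η < 1 := mul_lt_one_of_nonneg_of_lt_one_right hc1 hcos0.le hcos1
  have hu0 : 0 < c * cos η := mul_pos hc0 hcos0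
  have harccos := (hasDerivAt_arccos (by linarith) hu1.ne).comp η ((hasDerivAt_cos η).const_mul c)
  refine ((hasDerivAt_sinCosPrimitive k _).comp η harccos).congr_deriv ?_
  have hsqrt : √(1 - (c * cos η) ^ 2) ≠ 0 := (sqrt_pos.mpr (by nlinarith)).ne'
  simp only [Function.comp_apply]
  rw [sin_arccos, cos_arccos (by linarith) hu1.le]
  generalize √(1 - (c * cos η) ^ 2) = s at hsqrt ⊢
  field_simp

lemma integral_arccos_mul_cos_pow_mul_cos_mul_sin (k : ℕ) {c : ℝ} (hc0 : 0 < c)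
    (hc1 : c ≤ 1) :
    ∫ η in (0 : ℝ)..(π / 2), arccos (c * cos η) ^ k * cos η * sin η =
      sinCosPrimitive k (arccos c) / c ^ 2 := by
  have hderiv : ∀ η ∈ Set.Ioo 0 (π / 2),
      HasDerivAt (fun η => -sinCosPrimitive k (arccos (c * cos η)) / c ^ 2)
        (arccos (c * cos η) ^ k * cos η * sin η) η := fun η hη =>
    ((hasDerivAt_sinCosPrimitive_arccos_mul_cos k hc0 hc1 hη).neg.div_const (c ^ 2)).congr_deriv
      (by field_simp)
  have hcont : Continuous fun η => -sinCosPrimitive k (arccos (c * cos η)) / c ^ 2 := by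
    fun_prop
  rw [intervalIntegral.integral_eq_sub_of_hasDeriv_right_of_le (by positivity) hcont.continuousOn
    (fun η hη => (hderiv η hη).hasDerivWithinAt)
    (by apply Continuous.intervalIntegrable; fun_prop)]
  simp only [cos_pi_div_two, mul_zero, arccos_zero, sinCosPrimitive_pi_div_two, neg_zero,
    zero_div, cos_zero, mul_one, zero_sub]
  ring

lemma integral_neg_self_eq_two_mul_of_even {f : ℝ → ℝ} {a : ℝ} (heven : ∀ x, f (-x) = f x)
    (hf : IntervalIntegrable f volume (-a) a) :
    ∫ x in -a..a, f x = 2 * ∫ x in (0 : ℝ)..a, f x := by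
  have h0 : (0 : ℝ) ∈ Set.uIcc (-a) a := by
    rcases le_total 0 a with h | h <;> simp [h]
  rw [← intervalIntegral.integral_add_adjacent_intervals
    (hf.mono_set (Set.uIcc_subset_uIcc Set.left_mem_uIcc h0))
    (hf.mono_set (Set.uIcc_subset_uIcc h0 Set.right_mem_uIcc))]
  have hflip : ∫ x in -a..0, f x = ∫ x in (0 : ℝ)..a, f x := by
    simpa only [heven, neg_zero] using
      (intervalIntegral.integral_comp_neg (a := 0) (b := a) f).symm
  rw [hflip, two_mul]

/-- Integration of `sinCosPrimitive k x / cos x ^ 2` by parts against `tan`. -/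
noncomputable def secSqPrimitive (k : ℕ) (x : ℝ) : ℝ :=
  k ! / 2 ^ (k + 2) *
    (trigTail (k + 3) (2 * x) + tan x * (trigTail (k + 2) π - trigTail (k + 2) (2 * x)))

lemma secSqPrimitive_zero (k : ℕ) : secSqPrimitive k 0 = 0 := by
  simp [secSqPrimitive, trigTail_zero]

lemma hasDerivAt_secSqPrimitive (k : ℕ) {x : ℝ} (hx : cos x ≠ 0) :
    HasDerivAt (secSqPrimitive k) (sinCosPrimitive k x / cos x ^ 2) x := by
  have htan := (hasDerivAt_tan hx).mul
    ((hasDerivAt_const x (trigTail (k + 2) π)).sub (hasDerivAt_trigTail_two_mul (k + 1) x))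
  have h := ((hasDerivAt_trigTail_two_mul (k + 2) x).add htan).const_mul
    ((k ! : ℝ) / 2 ^ (k + 2))
  refine h.congr_deriv ?_
  simp only [Pi.sub_apply]
  rw [sinCosPrimitive, tan_eq_sin_div_cos, cos_two_mul, sin_two_mul]
  field_simp
  ring

lemma integral_sinCosPrimitive_div_cos_sq (k : ℕ) {a : ℝ}
    (ha : a ∈ Set.Ioo (-(π / 2)) (π / 2)) :
    ∫ x in (0 : ℝ)..a, sinCosPrimitive k x / cos x ^ 2 = secSqPrimitive k a := by
  have hcos : ∀ x ∈ Set.uIcc 0 a, cos x ≠ 0 := fun x hx =>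
    (cos_pos_of_mem_Ioo (Set.ordConnected_Ioo.uIcc_subset
      ⟨by linarith [pi_pos], by linarith [pi_pos]⟩ ha hx)).ne'
  rw [intervalIntegral.integral_eq_sub_of_hasDerivAt
    (fun x hx => hasDerivAt_secSqPrimitive k (hcos x hx))
    (((continuous_sinCosPrimitive k).continuousOn.div (continuous_cos.pow 2).continuousOn
      fun x hx => pow_ne_zero 2 (hcos x hx)).intervalIntegrable), secSqPrimitive_zero, sub_zero]

lemma integral_sinCosPrimitive_arccos_cos_div_cos_sq (k : ℕ) {a : ℝ} (ha0 : 0 ≤ a)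
    (ha : a < π / 2) :
    ∫ θ in -a..a, sinCosPrimitive k (arccos (cos θ)) / cos θ ^ 2 = 2 * secSqPrimitive k a := by
  have hcos : ∀ θ ∈ Set.uIcc (-a) a, cos θ ≠ 0 := fun θ hθ =>
    (cos_pos_of_mem_Ioo (Set.ordConnected_Ioo.uIcc_subset ⟨by linarith, by linarith⟩
      ⟨by linarith [pi_pos], ha⟩ hθ)).ne'
  have hint : IntervalIntegrable (fun θ => sinCosPrimitive k (arccos (cos θ)) / cos θ ^ 2)
      volume (-a) a :=
    (ContinuousOn.div (by fun_prop) (by fun_prop) fun θ hθ =>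
      pow_ne_zero 2 (hcos θ hθ)).intervalIntegrable
  have harccos : Set.EqOn (fun θ => sinCosPrimitive k (arccos (cos θ)) / cos θ ^ 2)
      (fun θ => sinCosPrimitive k θ / cos θ ^ 2) (Set.uIcc 0 a) := fun θ hθ => by
    rw [Set.uIcc_of_le ha0] at hθ
    simp only [arccos_cos hθ.1 (by linarith [hθ.2, pi_pos])]
  rw [integral_neg_self_eq_two_mul_of_even (fun θ => by simp only [cos_neg]) hint,
    intervalIntegral.integral_congr harccos,
    integral_sinCosPrimitive_div_cos_sq k ⟨by linarith [pi_pos], ha⟩]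

lemma integral_integral_integral_arccos_cos_mul_cos (k : ℕ) {a : ℝ} (ha0 : 0 ≤ a)
    (ha : a < π / 2) :
    ∫ _θ₂ in -a..a, ∫ θ₁ in -a..a, ∫ η in (0 : ℝ)..(π / 2),
      arccos (cos θ₁ * cos η) ^ k * cos η * sin η = 4 * a * secSqPrimitive k a := by
  have hinner : Set.EqOn
      (fun θ₁ => ∫ η in (0 : ℝ)..(π / 2), arccos (cos θ₁ * cos η) ^ k * cos η * sin η)
      (fun θ₁ => sinCosPrimitive k (arccos (cos θ₁)) / cos θ₁ ^ 2) (Set.uIcc (-a) a) :=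
    fun θ₁ hθ₁ => by
      rw [Set.uIcc_of_le (by linarith)] at hθ₁
      exact integral_arccos_mul_cos_pow_mul_cos_mul_sin k
        (cos_pos_of_mem_Ioo ⟨by linarith [hθ₁.1], by linarith [hθ₁.2]⟩) (cos_le_one θ₁)
  rw [intervalIntegral.integral_congr hinner,
    integral_sinCosPrimitive_arccos_cos_div_cos_sq k ha0 ha, intervalIntegral.integral_const,
    smul_eq_mul]
  ring

theorem moment_formula (n k : ℕ) (hn : 3 ≤ n) :
    momentI n k =
      (1 / (((k : ℝ) + 1) * ((k : ℝ) + 2))) *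
        ( (4 / ((k : ℝ) + 3)) * (Real.pi / n) ^ (k + 2)
            * oneFtwo (((k : ℝ) + 4) / 2) (((k : ℝ) + 5) / 2) (-(Real.pi ^ 2 / n ^ 2))
          + Real.tan (Real.pi / n) *
            ( (n : ℝ) * (Real.pi / 2) ^ (k + 1)
                * oneFtwo (((k : ℝ) + 3) / 2) (((k : ℝ) + 4) / 2) (-(Real.pi ^ 2 / 4))
              - 2 * (Real.pi / n) ^ (k + 1)
                * oneFtwo (((k : ℝ) + 3) / 2) (((k : ℝ) + 4) / 2) (-(Real.pi ^ 2 / n ^ 2)) ) ) := by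
  have hn0 : (n : ℝ) ≠ 0 := by positivity
  have ha0 : 0 < π / n := by positivity
  have ha : π / n < π / 2 :=
    div_lt_div_of_pos_left pi_pos two_pos (by exact_mod_cast (by omega : 2 < n))
  have hF₁ : oneFtwo (((k : ℝ) + 4) / 2) (((k : ℝ) + 5) / 2) (-(π ^ 2 / n ^ 2)) =
      (k + 3)! / (2 * (π / n)) ^ (k + 3) * trigTail (k + 3) (2 * (π / n)) := by
    convert oneFtwo_neg_sq (k + 1) ha0.ne' using 2 <;> push_cast <;> ring
  have hF₂ : oneFtwo (((k : ℝ) + 3) / 2) (((k : ℝ) + 4) / 2) (-(π ^ 2 / 4)) =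
      (k + 2)! / π ^ (k + 2) * trigTail (k + 2) π := by
    convert oneFtwo_neg_sq k (x := π / 2) (by positivity) using 2 <;> ring_nf
  have hF₃ : oneFtwo (((k : ℝ) + 3) / 2) (((k : ℝ) + 4) / 2) (-(π ^ 2 / n ^ 2)) =
      (k + 2)! / (2 * (π / n)) ^ (k + 2) * trigTail (k + 2) (2 * (π / n)) := by
    convert oneFtwo_neg_sq k ha0.ne' using 2; ring
  rw [momentI, integral_integral_integral_arccos_cos_mul_cos k ha0.le ha, hF₁, hF₂, hF₃,
    secSqPrimitive]
  push_cast [Nat.factorial_succ]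
  simp only [mul_pow, div_pow]
  field_simp
  ring
end

section
/- For every fixed integer n ≥ 3, the k-th moment of distance satisfies the asymptotic I(n,k) ~ (n/k²) · (π/2)^{k+1} · tan(π/n) as k → ∞; that is, the ratio I(n,k) / ( (n/k²) · (π/2)^{k+1} · tan(π/n) ) tends to 1 as k → ∞. -/
open MeasureTheory

/-!
The substitution `s = arccos (cos θ₁ cos η)` turns the inner integral into
`(cos θ₁)⁻² ∫_{|θ₁|}^{π/2} s^k sin s cos s ds`. Since `sin s cos s` vanishes linearly at
`π/2`, two integrations by parts show that this tail integral is
`(π/2)^(k+2) / ((k+1)(k+2))` up to `O(|θ₁|^(k+1) + (π/2)^k / k³)`; for `|θ₁| ≤ π/n < π/2` the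
first error is geometrically small against `(π/2)^k / k²`. Finally `(cos θ₁)⁻²` integrates to
`2 tan (π/n)` over `|θ₁| ≤ π/n`.
-/

open Real Filter Topology

lemma integral_comp_cos_mul_sin {g : ℝ → ℝ} (hg : Continuous g) :
    ∫ η in (0 : ℝ)..π / 2, g (cos η) * sin η = ∫ u in (0 : ℝ)..1, g u := by
  have h := intervalIntegral.integral_comp_mul_deriv (a := 0) (b := π / 2) (f := cos)
    (f' := fun η => -sin η) (fun η _ => hasDerivAt_cos η) continuous_sin.neg.continuousOn hg
  simp only [Function.comp_def, mul_neg, intervalIntegral.integral_neg, cos_zero,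
    cos_pi_div_two] at h
  rw [← neg_neg (∫ u in (0 : ℝ)..1, g u), ← intervalIntegral.integral_symm, ← h, neg_neg]

lemma integral_arccos_mul_eq_integral_sin_mul_cos {f : ℝ → ℝ} (hf : Continuous f) {c : ℝ}
    (hc : |c| ≤ 1) :
    ∫ t in (0 : ℝ)..c, f (arccos t) * t = ∫ s in arccos c..π / 2, f s * (sin s * cos s) := by
  have h := intervalIntegral.integral_comp_mul_deriv (a := arccos c) (b := π / 2) (f := cos)
    (f' := fun s => -sin s) (g := fun t => f (arccos t) * t)
    (fun s _ => hasDerivAt_cos s) continuous_sin.neg.continuousOn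
    ((hf.comp continuous_arccos).mul continuous_id)
  rw [cos_arccos (neg_le_of_abs_le hc) (le_of_abs_le hc), cos_pi_div_two,
    intervalIntegral.integral_symm 0 c] at h
  rw [← neg_eq_iff_eq_neg.mpr h, ← intervalIntegral.integral_neg]
  refine intervalIntegral.integral_congr fun s hs => ?_
  have hs' : s ∈ Set.Icc 0 π :=
    Set.uIcc_subset_Icc ⟨arccos_nonneg c, arccos_le_pi c⟩
      ⟨by positivity, by linarith [pi_pos]⟩ hs
  simp only [Function.comp_apply, arccos_cos hs'.1 hs'.2]
  ring

lemma integral_comp_arccos_mul_cos {f : ℝ → ℝ} (hf : Continuous f) {c : ℝ} (hc₀ : c ≠ 0)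
    (hc : |c| ≤ 1) :
    ∫ η in (0 : ℝ)..π / 2, f (arccos (c * cos η)) * cos η * sin η =
      (c ^ 2)⁻¹ * ∫ s in arccos c..π / 2, f s * (sin s * cos s) := by
  calc ∫ η in (0 : ℝ)..π / 2, f (arccos (c * cos η)) * cos η * sin η
      = ∫ u in (0 : ℝ)..1, f (arccos (c * u)) * u :=
        integral_comp_cos_mul_sin (g := fun u => f (arccos (c * u)) * u) (by fun_prop)
    _ = c⁻¹ * ∫ u in (0 : ℝ)..1, f (arccos (c * u)) * (c * u) := by
        rw [← intervalIntegral.integral_const_mul]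
        refine intervalIntegral.integral_congr fun u _ => ?_
        field_simp
    _ = (c ^ 2)⁻¹ * ∫ t in (0 : ℝ)..c, f (arccos t) * t := by
        rw [intervalIntegral.integral_comp_mul_left (fun t => f (arccos t) * t) hc₀, mul_zero,
          mul_one, smul_eq_mul, ← mul_assoc, ← mul_inv, sq]
    _ = _ := by rw [integral_arccos_mul_eq_integral_sin_mul_cos hf hc]

noncomputable def tailMoment (k : ℕ) (x : ℝ) : ℝ :=
  ∫ s in x..π / 2, s ^ k * (sin s * cos s)

lemma integral_arccos_cos_mul_cos_pow (k : ℕ) {θ : ℝ} (hθ : |θ| < π / 2) :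
    ∫ η in (0 : ℝ)..π / 2, arccos (cos θ * cos η) ^ k * cos η * sin η =
      (cos θ ^ 2)⁻¹ * tailMoment k |θ| := by
  have hcos : 0 < cos θ := cos_pos_of_mem_Ioo (abs_lt.mp hθ)
  rw [integral_comp_arccos_mul_cos (continuous_pow k) hcos.ne' (abs_cos_le_one θ), ← cos_abs,
    arccos_cos (abs_nonneg θ) (by linarith [pi_pos]), cos_abs]
  rfl

lemma continuous_tailMoment (k : ℕ) : Continuous (tailMoment k) := by
  have h : tailMoment k = fun x => -∫ s in π / 2..x, s ^ k * (sin s * cos s) := by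
    funext x
    exact intervalIntegral.integral_symm _ _
  rw [h]
  have hcont : Continuous fun s : ℝ => s ^ k * (sin s * cos s) := by fun_prop
  exact (intervalIntegral.continuous_primitive
    (fun _ _ => hcont.intervalIntegrable _ _) _).neg

lemma tailMoment_add_mul_tailMoment (k : ℕ) (x : ℝ) :
    tailMoment k x + 4 / ((k + 1) * (k + 2)) * tailMoment (k + 2) x =
      (π / 2) ^ (k + 2) / ((k + 1) * (k + 2)) - x ^ (k + 1) * (sin x * cos x) / (k + 1) +
        x ^ (k + 2) * cos (2 * x) / ((k + 1) * (k + 2)) := by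
  -- an explicit primitive, found by integrating by parts twice
  let Φ : ℝ → ℝ := fun s =>
    s ^ (k + 1) * (sin s * cos s) / (k + 1) -
      s ^ (k + 2) * (cos s ^ 2 - sin s ^ 2) / ((k + 1) * (k + 2))
  have hΦ : ∀ s, HasDerivAt Φ
      (s ^ k * (sin s * cos s) + 4 / ((k + 1) * (k + 2)) * (s ^ (k + 2) * (sin s * cos s))) s := by
    intro s
    refine HasDerivAt.congr_deriv (f := Φ)
      ((((hasDerivAt_pow (k + 1) s).mul ((hasDerivAt_sin s).mul (hasDerivAt_cos s))).div_const
        ((k : ℝ) + 1)).sub (((hasDerivAt_pow (k + 2) s).mul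
          (((hasDerivAt_cos s).pow 2).sub ((hasDerivAt_sin s).pow 2))).div_const
            (((k : ℝ) + 1) * (k + 2)))) ?_
    simp only [Nat.add_sub_cancel, show k + 2 - 1 = k + 1 from rfl, Nat.cast_add, Nat.cast_one,
      Nat.cast_ofNat, Pi.mul_apply, Pi.sub_apply, Pi.pow_apply]
    field_simp
    ring
  have hint : ∀ m : ℕ,
      IntervalIntegrable (fun s : ℝ => s ^ m * (sin s * cos s)) volume x (π / 2) := fun m =>
    (by fun_prop : Continuous fun s : ℝ => s ^ m * (sin s * cos s)).intervalIntegrable _ _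
  rw [tailMoment, tailMoment, ← intervalIntegral.integral_const_mul,
    ← intervalIntegral.integral_add (hint k) ((hint (k + 2)).const_mul _),
    intervalIntegral.integral_eq_sub_of_hasDerivAt (fun s _ => hΦ s)
      ((hint k).add ((hint (k + 2)).const_mul _))]
  simp only [Φ, sin_pi_div_two, cos_pi_div_two, cos_two_mul']
  ring

lemma abs_tailMoment_le (m : ℕ) {x : ℝ} (hx : 0 ≤ x) (hxb : x ≤ π / 2) :
    |tailMoment m x| ≤ (π / 2) ^ (m + 1) / (m + 1) := by
  have hbound : ∀ s ∈ Set.Ioc x (π / 2), ‖s ^ m * (sin s * cos s)‖ ≤ s ^ m := by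
    intro s hs
    have hs0 : 0 ≤ s := hx.trans hs.1.le
    rw [norm_mul, norm_pow, Real.norm_of_nonneg hs0, norm_mul]
    exact mul_le_of_le_one_right (by positivity)
      (mul_le_one₀ (abs_sin_le_one s) (norm_nonneg _) (abs_cos_le_one s))
  have h := intervalIntegral.norm_integral_le_of_norm_le (μ := volume) hxb
    (Filter.Eventually.of_forall hbound) ((continuous_pow m).intervalIntegrable _ _)
  rw [integral_pow] at h
  refine h.trans ?_
  gcongr
  exact sub_le_self _ (by positivity)

lemma abs_tailMoment_sub_le (k : ℕ) {x : ℝ} (hx : 0 ≤ x) (hxb : x ≤ π / 2) :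
    |tailMoment k x - (π / 2) ^ (k + 2) / ((k + 1) * (k + 2))| ≤
      x ^ (k + 1) + x ^ (k + 2) + 4 * (π / 2) ^ (k + 3) / ((k + 1) * (k + 2) * (k + 3)) := by
  have hk1 : (1 : ℝ) ≤ k + 1 := by simp
  have hk2 : (1 : ℝ) ≤ (k + 1) * (k + 2) := by nlinarith
  have h₁ : |x ^ (k + 1) * (sin x * cos x) / (k + 1)| ≤ x ^ (k + 1) := by
    rw [abs_div, abs_mul, abs_of_nonneg (by positivity : 0 ≤ x ^ (k + 1)),
      abs_of_pos (by positivity : (0 : ℝ) < k + 1)]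
    calc x ^ (k + 1) * |sin x * cos x| / (k + 1) ≤ x ^ (k + 1) * 1 / 1 := by
          gcongr
          rw [abs_mul]
          exact mul_le_one₀ (abs_sin_le_one x) (abs_nonneg _) (abs_cos_le_one x)
      _ = x ^ (k + 1) := by ring
  have h₂ : |x ^ (k + 2) * cos (2 * x) / ((k + 1) * (k + 2))| ≤ x ^ (k + 2) := by
    rw [abs_div, abs_mul, abs_of_nonneg (by positivity : 0 ≤ x ^ (k + 2)),
      abs_of_pos (by positivity : (0 : ℝ) < (k + 1) * (k + 2))]
    calc x ^ (k + 2) * |cos (2 * x)| / ((k + 1) * (k + 2)) ≤ x ^ (k + 2) * 1 / 1 := by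
          gcongr
          exact abs_cos_le_one _
      _ = x ^ (k + 2) := by ring
  have h₃ : |4 / ((k + 1) * (k + 2)) * tailMoment (k + 2) x| ≤
      4 * (π / 2) ^ (k + 3) / ((k + 1) * (k + 2) * (k + 3)) := by
    have := abs_tailMoment_le (k + 2) hx hxb
    push_cast at this
    rw [abs_mul, abs_of_pos (by positivity : (0 : ℝ) < 4 / ((k + 1) * (k + 2)))]
    calc 4 / ((k + 1) * (k + 2)) * |tailMoment (k + 2) x|
        ≤ 4 / ((k + 1) * (k + 2)) * ((π / 2) ^ (k + 2 + 1) / (k + 2 + 1)) := by gcongr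
      _ = _ := by field_simp; ring
  have h := tailMoment_add_mul_tailMoment k x
  calc |tailMoment k x - (π / 2) ^ (k + 2) / ((k + 1) * (k + 2))|
      = |-(x ^ (k + 1) * (sin x * cos x) / (k + 1)) +
          x ^ (k + 2) * cos (2 * x) / ((k + 1) * (k + 2)) +
          -(4 / ((k + 1) * (k + 2)) * tailMoment (k + 2) x)| := by
        congr 1; linarith
    _ ≤ _ := by
        refine (abs_add_three _ _ _).trans ?_
        rw [abs_neg, abs_neg]
        gcongr

lemma integral_inv_cos_sq {a b : ℝ} (h : ∀ θ ∈ Set.uIcc a b, cos θ ≠ 0) :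
    ∫ θ in a..b, (cos θ ^ 2)⁻¹ = tan b - tan a := by
  refine intervalIntegral.integral_eq_sub_of_hasDerivAt
    (fun θ hθ => by simpa only [one_div] using hasDerivAt_tan (h θ hθ)) ?_
  exact ContinuousOn.intervalIntegrable
    ((continuousOn_cos.pow 2).inv₀ fun θ hθ => pow_ne_zero 2 (h θ hθ))

lemma abs_integral_tailMoment_sub_le (k : ℕ) {a : ℝ} (ha₀ : 0 ≤ a) (ha : a < π / 2) :
    |(∫ θ in -a..a, (cos θ ^ 2)⁻¹ * tailMoment k |θ|) -
        2 * tan a * ((π / 2) ^ (k + 2) / ((k + 1) * (k + 2)))| ≤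
      2 * tan a * (a ^ (k + 1) + a ^ (k + 2) +
        4 * (π / 2) ^ (k + 3) / ((k + 1) * (k + 2) * (k + 3))) := by
  set main := (π / 2) ^ (k + 2) / ((k + 1) * (k + 2))
  set err := a ^ (k + 1) + a ^ (k + 2) + 4 * (π / 2) ^ (k + 3) / ((k + 1) * (k + 2) * (k + 3))
  have habs : ∀ θ ∈ Set.uIcc (-a) a, |θ| ≤ a := fun θ hθ =>
    abs_le.mpr (by rwa [Set.uIcc_of_le (by linarith)] at hθ)
  have hcos : ∀ θ ∈ Set.uIcc (-a) a, cos θ ≠ 0 := fun θ hθ =>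
    (cos_pos_of_mem_Ioo (abs_lt.mp ((habs θ hθ).trans_lt ha))).ne'
  have hsec : IntervalIntegrable (fun θ => (cos θ ^ 2)⁻¹) volume (-a) a :=
    ContinuousOn.intervalIntegrable
      ((continuousOn_cos.pow 2).inv₀ fun θ hθ => pow_ne_zero 2 (hcos θ hθ))
  have htail : IntervalIntegrable (fun θ => (cos θ ^ 2)⁻¹ * tailMoment k |θ|) volume (-a) a :=
    hsec.mul_continuousOn ((continuous_tailMoment k).comp continuous_abs).continuousOn
  have htan : ∫ θ in -a..a, (cos θ ^ 2)⁻¹ = 2 * tan a := by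
    rw [integral_inv_cos_sq hcos, tan_neg]
    ring
  have hpointwise : ∀ θ ∈ Set.Ioc (-a) a,
      ‖(cos θ ^ 2)⁻¹ * (tailMoment k |θ| - main)‖ ≤ (cos θ ^ 2)⁻¹ * err := by
    intro θ hθ
    have hθa := habs θ (Set.Ioc_subset_Icc_self.trans Set.Icc_subset_uIcc hθ)
    rw [norm_mul, Real.norm_of_nonneg (by positivity), Real.norm_eq_abs]
    refine mul_le_mul_of_nonneg_left ?_ (by positivity)
    refine (abs_tailMoment_sub_le k (abs_nonneg θ) (by linarith)).trans ?_
    simp only [err]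
    gcongr
  calc |(∫ θ in -a..a, (cos θ ^ 2)⁻¹ * tailMoment k |θ|) - 2 * tan a * main|
      = ‖∫ θ in -a..a, (cos θ ^ 2)⁻¹ * (tailMoment k |θ| - main)‖ := by
        rw [← htan, ← intervalIntegral.integral_mul_const,
          ← intervalIntegral.integral_sub htail (hsec.mul_const _), Real.norm_eq_abs]
        simp only [mul_sub]
    _ ≤ ∫ θ in -a..a, (cos θ ^ 2)⁻¹ * err :=
        intervalIntegral.norm_integral_le_of_norm_le (by linarith)
          (Filter.Eventually.of_forall hpointwise) (hsec.mul_const _)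
    _ = 2 * tan a * err := by rw [intervalIntegral.integral_mul_const, htan]

lemma tendsto_sq_div_add_one_mul_add_two :
    Tendsto (fun k : ℕ => (k : ℝ) ^ 2 / ((k + 1) * (k + 2))) atTop (𝓝 1) := by
  have h := (tendsto_natCast_div_add_atTop (𝕜 := ℝ) 1).mul (tendsto_natCast_div_add_atTop 2)
  rw [mul_one] at h
  refine h.congr fun k => ?_
  rw [div_mul_div_comm, sq]

lemma tendsto_sq_mul_div_pow_of_abs_sub_le {a b c : ℝ} (ha : 0 ≤ a) (hab : a < b) (hc : 0 < c)
    {u : ℕ → ℝ}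
    (hu : ∀ k : ℕ, |u k - c * (b ^ (k + 2) / ((k + 1) * (k + 2)))| ≤
      c * (a ^ (k + 1) + a ^ (k + 2) + 4 * b ^ (k + 3) / ((k + 1) * (k + 2) * (k + 3)))) :
    Tendsto (fun k : ℕ => k ^ 2 * u k / (c * b ^ (k + 2))) atTop (𝓝 1) := by
  have hb : 0 < b := ha.trans_lt hab
  have hgeom : Tendsto (fun k : ℕ => (k : ℝ) ^ 2 * (a / b) ^ k) atTop (𝓝 0) :=
    tendsto_pow_const_mul_const_pow_of_abs_lt_one 2
      (by rwa [abs_of_nonneg (by positivity), div_lt_one hb])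
  have hharm : Tendsto (fun k : ℕ => 4 * b / ((k : ℝ) + 3)) atTop (𝓝 0) :=
    tendsto_const_nhds.div_atTop (tendsto_atTop_add_const_right _ 3 tendsto_natCast_atTop_atTop)
  have herr := (hgeom.const_mul (a / b ^ 2 + (a / b) ^ 2)).add
    (tendsto_sq_div_add_one_mul_add_two.mul hharm)
  rw [mul_zero, mul_zero, add_zero] at herr
  have hdiff : Tendsto
      (fun k : ℕ => k ^ 2 * u k / (c * b ^ (k + 2)) - k ^ 2 / ((k + 1) * (k + 2))) atTop (𝓝 0) := by
    refine squeeze_zero_norm (fun k => ?_) herr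
    have hscale : (0 : ℝ) ≤ k ^ 2 / (c * b ^ (k + 2)) := by positivity
    calc ‖(k : ℝ) ^ 2 * u k / (c * b ^ (k + 2)) - k ^ 2 / ((k + 1) * (k + 2))‖
        = |k ^ 2 / (c * b ^ (k + 2)) * (u k - c * (b ^ (k + 2) / ((k + 1) * (k + 2))))| := by
          rw [Real.norm_eq_abs]
          congr 1
          field_simp
      _ = k ^ 2 / (c * b ^ (k + 2)) * |u k - c * (b ^ (k + 2) / ((k + 1) * (k + 2)))| := by
          rw [abs_mul, abs_of_nonneg hscale]
      _ ≤ k ^ 2 / (c * b ^ (k + 2)) *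
          (c * (a ^ (k + 1) + a ^ (k + 2) + 4 * b ^ (k + 3) / ((k + 1) * (k + 2) * (k + 3)))) := by
          gcongr
          exact hu k
      _ = (a / b ^ 2 + (a / b) ^ 2) * (k ^ 2 * (a / b) ^ k) +
          k ^ 2 / ((k + 1) * (k + 2)) * (4 * b / (k + 3)) := by
          field_simp
          rw [div_pow]
          field_simp
          ring
  simpa using hdiff.add tendsto_sq_div_add_one_mul_add_two

lemma momentI_eq (n k : ℕ) (hn : 2 < n) :
    momentI n k = n / π * ∫ θ in -(π / n)..π / n, (cos θ ^ 2)⁻¹ * tailMoment k |θ| := by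
  have hn' : (2 : ℝ) < n := by exact_mod_cast hn
  have ha₀ : 0 ≤ π / n := by positivity
  have hsmall : ∀ θ ∈ Set.uIcc (-(π / n)) (π / n), |θ| < π / 2 := fun θ hθ =>
    (abs_le.mpr (by rwa [Set.uIcc_of_le (by linarith)] at hθ)).trans_lt
      (div_lt_div_of_pos_left pi_pos two_pos hn')
  rw [momentI, intervalIntegral.integral_const, smul_eq_mul,
    intervalIntegral.integral_congr fun θ hθ => integral_arccos_cos_mul_cos_pow k (hsmall θ hθ)]
  field_simp
  ring

theorem moment_asymptotics (n : ℕ) (hn : 3 ≤ n) :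
    Filter.Tendsto
      (fun k : ℕ =>
        momentI n k /
          (((n : ℝ) / (k : ℝ) ^ 2) * (Real.pi / 2) ^ (k + 1) * Real.tan (Real.pi / n)))
      Filter.atTop (nhds 1) := by
  have hn' : (3 : ℝ) ≤ n := by exact_mod_cast hn
  have ha₀ : 0 < π / n := by positivity
  have ha : π / n < π / 2 := div_lt_div_of_pos_left pi_pos two_pos (by linarith)
  have htan : 0 < tan (π / n) := tan_pos_of_pos_of_lt_pi_div_two ha₀ ha
  have hlim := tendsto_sq_mul_div_pow_of_abs_sub_le ha₀.le ha
    (by positivity : 0 < 2 * tan (π / n)) (abs_integral_tailMoment_sub_le · ha₀.le ha)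
  refine hlim.congr' ?_
  filter_upwards [eventually_ne_atTop 0] with k hk
  rw [momentI_eq n k hn]
  field_simp
  ring
end

section
/- For every integer n ≥ 3 and every integer k ≥ 0, the k-th moment of distance equals the k-th moment of the probability density f_n: I(n,k) = ∫_0^{π/2} x^k · f_n(x) dx, where f_n(x) = (2n/π) · sin²(x) for 0 ≤ x ≤ π/n and f_n(x) = (2n/π) · sin(x) · cos(x) · tan(π/n) for π/n < x ≤ π/2. -/
/-! Substituting `x = arccos (cos θ₁ * cos η)` turns the `η`-integral into
`(cos θ₁)⁻² * ∫ x in θ₁..π/2, x ^ k * sin x * cos x` for `0 < θ₁ < π/2`. The `θ₂`-integral is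
trivial and the `θ₁`-integrand is even, so it remains to integrate over `[0, π/n]`; there an
integration by parts against `d(tan θ) = dθ / cos² θ` splits the moment into
`∫ x in 0..π/n, x ^ k * sin² x` and `tan (π/n) * ∫ x in π/n..π/2, x ^ k * sin x * cos x`,
which is exactly how the two branches of `pdfF n` split the right-hand side. -/

open MeasureTheory

/-- The probability density function of distance between two uniform random points
on the homogeneous lens space `L(n;1)`. -/
noncomputable def pdfF (n : ℕ) (x : ℝ) : ℝ :=
  if x ≤ Real.pi / n then (2 * n / Real.pi) * Real.sin x ^ 2
  else (2 * n / Real.pi) * Real.sin x * Real.cos x * Real.tan (Real.pi / n)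

open Real Set intervalIntegral
open scoped Interval

theorem integral_neg_to_eq_two_mul_integral_of_even {f : ℝ → ℝ} {a : ℝ}
    (heven : ∀ x, f (-x) = f x) (hf : IntervalIntegrable f volume (-a) a) :
    ∫ x in -a..a, f x = 2 * ∫ x in 0..a, f x := by
  have hzero : (0 : ℝ) ∈ uIcc (-a) a := by
    rcases le_total 0 a with h | h <;> simp [h]
  have hneg : ∫ x in -a..0, f x = ∫ x in 0..a, f x := by
    simpa [heven] using (integral_comp_neg (a := 0) (b := a) f).symm
  rw [← integral_add_adjacent_intervals (b := 0)
    (hf.mono_set (uIcc_subset_uIcc_left hzero)) (hf.mono_set (uIcc_subset_uIcc_right hzero)),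
    hneg]
  ring

theorem integral_comp_arccos_mul_cos_s15 {g : ℝ → ℝ} (hg : Continuous g) {θ : ℝ}
    (h0 : 0 < θ) (hπ : θ < π) :
    cos θ ^ 2 * ∫ η in 0..π / 2, g (arccos (cos θ * cos η)) * cos η * sin η =
      ∫ x in θ..π / 2, g x * sin x * cos x := by
  set c := cos θ
  have hc : |c| < 1 := abs_lt.2
    ⟨by simpa using cos_lt_cos_of_nonneg_of_le_pi h0.le le_rfl hπ,
     by simpa using cos_lt_cos_of_nonneg_of_le_pi le_rfl hπ.le h0⟩
  have hlt : ∀ η, |c * cos η| < 1 := fun η => by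
    rw [abs_mul]
    nlinarith [abs_nonneg c, abs_cos_le_one η, abs_nonneg (cos η)]
  have hsqrt : ∀ η, sqrt (1 - (c * cos η) ^ 2) ≠ 0 := fun η =>
    (sqrt_pos.2 (by nlinarith [sq_abs (c * cos η), abs_nonneg (c * cos η), hlt η])).ne'
  have hderiv : ∀ η ∈ uIcc 0 (π / 2), HasDerivAt (fun η => arccos (c * cos η))
      (c * sin η / sqrt (1 - (c * cos η) ^ 2)) η := fun η _ => by
    refine ((hasDerivAt_arccos (abs_lt.1 (hlt η)).1.ne' (abs_lt.1 (hlt η)).2.ne).comp η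
      ((hasDerivAt_cos η).const_mul c)).congr_deriv ?_
    ring
  have hsubst := integral_comp_mul_deriv hderiv
    (Continuous.continuousOn (by fun_prop (disch := exact hsqrt _)))
    (show Continuous fun x => g x * sin x * cos x by fun_prop)
  simp only [cos_zero, mul_one, cos_pi_div_two, mul_zero, arccos_zero, Function.comp_apply,
    show arccos c = θ from arccos_cos h0.le hπ.le] at hsubst
  rw [← hsubst, ← intervalIntegral.integral_const_mul]
  refine integral_congr fun η _ => ?_
  rw [sin_arccos, cos_arccos (abs_lt.1 (hlt η)).1.le (abs_lt.1 (hlt η)).2.le]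
  have hη := hsqrt η
  rw [mul_pow] at hη ⊢
  field_simp

theorem integral_tail_integral_div_cos_sq {g : ℝ → ℝ} (hg : Continuous g) {a : ℝ}
    (ha : a ∈ Ioo (-(π / 2)) (π / 2)) :
    ∫ θ in 0..a, (∫ x in θ..π / 2, g x * sin x * cos x) / cos θ ^ 2 =
      tan a * (∫ x in a..π / 2, g x * sin x * cos x) + ∫ x in 0..a, g x * sin x ^ 2 := by
  have hcos : ∀ θ ∈ uIcc 0 a, cos θ ≠ 0 := fun θ hθ =>
    (cos_pos_of_mem_Ioo (ordConnected_Ioo.uIcc_subset (by simp [pi_pos]) ha hθ)).ne'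
  have hG : Continuous fun x => g x * sin x * cos x := by fun_prop
  have hparts := intervalIntegral.integral_mul_deriv_eq_deriv_mul
    (fun θ _ => integral_hasDerivAt_left (hG.intervalIntegrable θ (π / 2))
      (hG.stronglyMeasurableAtFilter _ _) hG.continuousAt)
    (fun θ hθ => hasDerivAt_tan (hcos θ hθ))
    (hG.neg.intervalIntegrable _ _)
    (ContinuousOn.intervalIntegrable (continuousOn_const.div (by fun_prop)
      fun θ hθ => pow_ne_zero 2 (hcos θ hθ)))
  simp only [mul_one_div, tan_zero, mul_zero, sub_zero] at hparts
  rw [hparts, sub_eq_add_neg, ← intervalIntegral.integral_neg, mul_comm]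
  congr 1
  refine integral_congr fun θ hθ => ?_
  rw [tan_eq_sin_div_cos]
  field_simp [hcos θ hθ]

theorem integral_mul_pdfF {φ : ℝ → ℝ} (hφ : Continuous φ) {n : ℕ} (hn : 2 ≤ n) :
    ∫ x in 0..π / 2, φ x * pdfF n x =
      2 * n / π * ((∫ x in 0..π / n, φ x * sin x ^ 2) +
        tan (π / n) * ∫ x in π / n..π / 2, φ x * sin x * cos x) := by
  have ha0 : 0 ≤ π / n := by positivity
  have ha2 : π / n ≤ π / 2 :=
    div_le_div_of_nonneg_left pi_pos.le two_pos (by exact_mod_cast hn)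
  have hleft : EqOn (fun x => φ x * pdfF n x) (fun x => 2 * n / π * (φ x * sin x ^ 2))
      (Ι 0 (π / n)) := fun x hx => by
    rw [uIoc_of_le ha0] at hx
    simp only [pdfF, if_pos hx.2]
    ring
  have hright : EqOn (fun x => φ x * pdfF n x)
      (fun x => 2 * n / π * tan (π / n) * (φ x * sin x * cos x)) (Ι (π / n) (π / 2)) :=
    fun x hx => by
      rw [uIoc_of_le ha2] at hx
      simp only [pdfF, if_neg (not_le.2 hx.1)]
      ring
  rw [← integral_add_adjacent_intervals (b := π / n)
      ((intervalIntegrable_congr hleft).2 ((by fun_prop : Continuous _).intervalIntegrable _ _))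
      ((intervalIntegrable_congr hright).2 ((by fun_prop : Continuous _).intervalIntegrable _ _)),
    integral_congr_ae (ae_of_all _ fun x hx => hleft hx),
    integral_congr_ae (ae_of_all _ fun x hx => hright hx),
    intervalIntegral.integral_const_mul, intervalIntegral.integral_const_mul]
  ring

theorem momentI_eq_sin_sq_add_tan_mul (k : ℕ) {n : ℕ} (hn : 3 ≤ n) :
    momentI n k = 2 * n / π * ((∫ x in 0..π / n, x ^ k * sin x ^ 2) +
        tan (π / n) * ∫ x in π / n..π / 2, x ^ k * sin x * cos x) := by
  set a := π / (n : ℝ)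
  have ha0 : 0 < a := by positivity
  have ha2 : a < π / 2 :=
    div_lt_div_of_pos_left pi_pos two_pos (by exact_mod_cast (by omega : 2 < n))
  set G : ℝ → ℝ := fun θ => ∫ η in 0..π / 2, arccos (cos θ * cos η) ^ k * cos η * sin η
  have hG : Continuous G := by fun_prop
  have hG_eq : EqOn G (fun θ => (∫ x in θ..π / 2, x ^ k * sin x * cos x) / cos θ ^ 2) (Ι 0 a) :=
    fun θ hθ => by
      rw [uIoc_of_le ha0.le] at hθ
      have hcos : 0 < cos θ := cos_pos_of_mem_Ioo ⟨by linarith [hθ.1], by linarith [hθ.2]⟩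
      rw [eq_div_iff (pow_ne_zero 2 hcos.ne'),
        ← integral_comp_arccos_mul_cos_s15 (continuous_pow k) hθ.1 (by linarith [hθ.2])]
      ring
  rw [momentI, intervalIntegral.integral_const, smul_eq_mul,
    integral_neg_to_eq_two_mul_integral_of_even (f := G) (by simp [G, cos_neg])
      (hG.intervalIntegrable _ _),
    integral_congr_ae (ae_of_all _ fun θ hθ => hG_eq hθ),
    integral_tail_integral_div_cos_sq (continuous_pow k) ⟨by linarith, ha2⟩]
  field_simp
  ring

theorem moment_eq_pdf_moment (n k : ℕ) (hn : 3 ≤ n) :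
    momentI n k = ∫ x in (0 : ℝ)..(Real.pi / 2), x ^ k * pdfF n x := by
  rw [momentI_eq_sin_sq_add_tan_mul k hn, integral_mul_pdfF (continuous_pow k) (by omega)]
end
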